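/- Let 0 < p < 1, let ϑ be any inner function and let ζ ∈ 𝕋. Then the rational function z ↦ 1/(1−conj(ζ)z) belongs to H^p and its boundary function belongs to ϑ·conj(H^p_0). -/

import Mathlib

open MeasureTheory Complex Filter Set Metric Polynomial

noncomputable section

/-- Normalized arc-length measure on the unit circle 𝕋, realized on the
parameter interval `(0, 2π]` via `θ ↦ e^{iθ}`. -/
def arcM : Measure ℝ :=
  (ENNReal.ofReal (2 * Real.pi))⁻¹ • (volume.restrict (Set.Ioc 0 (2 * Real.pi)))

/-- The open unit disc 𝔻 ⊆ ℂ. -/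
def uDisc : Set ℂ := Metric.ball 0 1

/-- The unit circle 𝕋 ⊆ ℂ. -/
def uCircle : Set ℂ := Metric.sphere 0 1

/-- The boundary point `e^{iθ}`. -/
def bpt (θ : ℝ) : ℂ := Complex.exp (θ * Complex.I)

/-- `f` is analytic on the open unit disc. -/
def AnalyticOnDisc (f : ℂ → ℂ) : Prop := DifferentiableOn ℂ f uDisc

/-- The integral mean `∫_𝕋 |f(rζ)|^p dm(ζ)`. -/
def hMean (p : ℝ) (f : ℂ → ℂ) (r : ℝ) : ℝ := ∫ θ, ‖f ((r : ℂ) * bpt θ)‖ ^ p ∂arcM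

/-- Membership in the Hardy space `H^p`, `0 < p < ∞`. -/
def MemHp (p : ℝ) (f : ℂ → ℂ) : Prop :=
  AnalyticOnDisc f ∧ BddAbove (hMean p f '' Set.Ioo 0 1)

/-- The Hardy space (quasi-)norm `‖f‖_{H^p} = (sup_{0<r<1} ∫_𝕋 |f(rζ)|^p dm)^{min(1,1/p)}`. -/
def hardyNorm (p : ℝ) (f : ℂ → ℂ) : ℝ :=
  sSup (hMean p f '' Set.Ioo 0 1) ^ min 1 (1 / p)

/-- Membership in `H^∞`: bounded analytic functions on 𝔻. -/
def MemHinf (f : ℂ → ℂ) : Prop :=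
  AnalyticOnDisc f ∧ ∃ C : ℝ, ∀ z ∈ uDisc, ‖f z‖ ≤ C

/-- `F` is (a representative of) the boundary function of `f` : radial limits a.e. on 𝕋. -/
def BoundaryFn (f : ℂ → ℂ) (F : ℝ → ℂ) : Prop :=
  ∀ᵐ θ ∂arcM, Filter.Tendsto (fun r : ℝ => f ((r : ℂ) * bpt θ))
    (nhdsWithin 1 (Set.Iio 1)) (nhds (F θ))

/-- `ϑ` is an inner function: bounded analytic with unimodular boundary values a.e. -/
def IsInner (ϑ : ℂ → ℂ) : Prop :=
  MemHinf ϑ ∧ ∃ Θ : ℝ → ℂ, BoundaryFn ϑ Θ ∧ ∀ᵐ θ ∂arcM, ‖Θ θ‖ = 1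

/-- The boundary function of `f` lies in `ϑ ⋅ conj(H^p_0)`. -/
def PseudoCont (p : ℝ) (ϑ f : ℂ → ℂ) : Prop :=
  ∃ F Θ G : ℝ → ℂ, ∃ g : ℂ → ℂ,
    BoundaryFn f F ∧ BoundaryFn ϑ Θ ∧ MemHp p g ∧ g 0 = 0 ∧ BoundaryFn g G ∧
    ∀ᵐ θ ∂arcM, F θ = Θ θ * (starRingEnd ℂ) (G θ)

/-- The boundary function of `f` lies in `ϑ ⋅ conj(H^∞_0)`. -/
def PseudoContInf (ϑ f : ℂ → ℂ) : Prop :=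
  ∃ F Θ G : ℝ → ℂ, ∃ g : ℂ → ℂ,
    BoundaryFn f F ∧ BoundaryFn ϑ Θ ∧ MemHinf g ∧ g 0 = 0 ∧ BoundaryFn g G ∧
    ∀ᵐ θ ∂arcM, F θ = Θ θ * (starRingEnd ℂ) (G θ)

/-- `f` extends analytically across the boundary set `S ⊆ 𝕋`. -/
def ExtendsAcross (f : ℂ → ℂ) (S : Set ℂ) : Prop :=
  ∃ U : Set ℂ, ∃ g : ℂ → ℂ, IsOpen U ∧ S ⊆ U ∧
    DifferentiableOn ℂ g (uDisc ∪ U) ∧ Set.EqOn g f uDisc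

/-- The boundary spectrum `σ(ϑ)`: the points of 𝕋 across which `ϑ` admits no
analytic continuation. -/
def bSpectrum (ϑ : ℂ → ℂ) : Set ℂ := {ζ | ζ ∈ uCircle ∧ ¬ ExtendsAcross ϑ {ζ}}

/-- Membership in the space `K^p_ϑ` of pseudocontinuable functions, `0 < p < ∞`:
`f ∈ H^p`, the boundary function of `f` lies in `ϑ ⋅ conj(H^p_0)`, and `f`
continues analytically across `𝕋 ∖ σ(ϑ)`. -/
def MemKp (p : ℝ) (ϑ f : ℂ → ℂ) : Prop :=
  MemHp p f ∧ PseudoCont p ϑ f ∧ ExtendsAcross f (uCircle \ bSpectrum ϑ)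

/-- Membership in `K^∞_ϑ = H^∞ ∩ ϑ ⋅ conj(H^∞_0)`. -/
def MemKinf (ϑ f : ℂ → ℂ) : Prop := MemHinf f ∧ PseudoContInf ϑ f

/-- The backward shift `f ↦ (f - f(0))/z`. -/
def bShift (f : ℂ → ℂ) : ℂ → ℂ :=
  fun z => if z = 0 then deriv f 0 else (f z - f 0) / z

/-- `X ∩ K^p_ϑ` is dense in `K^p_ϑ` in the `H^p` metric. -/
def DenseInKp (p : ℝ) (ϑ : ℂ → ℂ) (X : Set (ℂ → ℂ)) : Prop :=
  ∀ f : ℂ → ℂ, MemKp p ϑ f → ∀ ε > (0 : ℝ), ∃ g ∈ X, MemKp p ϑ g ∧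
    hardyNorm p (fun z => f z - g z) < ε

/-- `X ∩ K^∞_ϑ` is dense in `K^∞_ϑ` in the weak-star topology inherited from
`L^∞(𝕋, m) = (L¹(𝕋, m))^*`. -/
def WStarDenseKinf (ϑ : ℂ → ℂ) (X : Set (ℂ → ℂ)) : Prop :=
  ∀ f : ℂ → ℂ, MemKinf ϑ f → ∀ F : ℝ → ℂ, BoundaryFn f F →
    ∀ (n : ℕ) (h : Fin n → ℝ → ℂ), (∀ i, Integrable (h i) arcM) → ∀ ε > (0 : ℝ),
      ∃ g ∈ X, MemKinf ϑ g ∧ ∃ G : ℝ → ℂ, BoundaryFn g G ∧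
        ∀ i, ‖∫ θ, (F θ - G θ) * h i θ ∂arcM‖ < ε

section AuxLemmas

open Real

lemma bpt_norm (θ : ℝ) : ‖bpt θ‖ = 1 := by
  simp [bpt, Complex.norm_exp]

lemma bpt_ne_zero (θ : ℝ) : bpt θ ≠ 0 := Complex.exp_ne_zero _

lemma bpt_continuous : Continuous bpt := by
  unfold bpt; fun_prop

lemma bpt_add (x y : ℝ) : bpt (x + y) = bpt x * bpt y := by
  rw [bpt, bpt, bpt, ← Complex.exp_add]
  push_cast; ring_nf

lemma bpt_two_pi : bpt (2 * π) = 1 := by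
  rw [bpt]; push_cast; exact Complex.exp_two_pi_mul_I

lemma abs_le_two_mul_norm_bpt_sub_one {x : ℝ} (hx : |x| ≤ π) : |x| ≤ 2 * ‖bpt x - 1‖ := by
  have hcos : Real.cos x ≤ 1 - 2 / π ^ 2 * x ^ 2 := Real.cos_le_one_sub_mul_cos_sq hx
  have hns : ‖bpt x - 1‖ ^ 2 = 2 - 2 * Real.cos x := by
    rw [Complex.sq_norm, Complex.normSq_apply]
    have h1 : (bpt x).re = Real.cos x := Complex.exp_ofReal_mul_I_re x
    have h2 : (bpt x).im = Real.sin x := Complex.exp_ofReal_mul_I_im x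
    simp only [Complex.sub_re, Complex.sub_im, Complex.one_re, Complex.one_im, h1, h2]
    nlinarith [Real.sin_sq_add_cos_sq x]
  have hpi : 0 < π := Real.pi_pos
  have h16 : π ^ 2 ≤ 16 := by nlinarith [Real.pi_le_four]
  have h' : 2 / π ^ 2 * x ^ 2 ≤ 1 - Real.cos x := by linarith
  have key : 2 * x ^ 2 ≤ (1 - Real.cos x) * π ^ 2 := by
    have := mul_le_mul_of_nonneg_right h' (sq_nonneg π)
    calc 2 * x ^ 2 = 2 / π ^ 2 * x ^ 2 * π ^ 2 := by field_simp
      _ ≤ (1 - Real.cos x) * π ^ 2 := this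
  have hx2 : x ^ 2 ≤ (2 * ‖bpt x - 1‖) ^ 2 := by
    have hc1 : Real.cos x ≤ 1 := Real.cos_le_one x
    nlinarith [hns]
  calc |x| = Real.sqrt (x ^ 2) := (Real.sqrt_sq_eq_abs x).symm
    _ ≤ Real.sqrt ((2 * ‖bpt x - 1‖) ^ 2) := Real.sqrt_le_sqrt hx2
    _ = |2 * ‖bpt x - 1‖| := Real.sqrt_sq_eq_abs _
    _ = 2 * ‖bpt x - 1‖ := abs_of_nonneg (by positivity)

lemma exists_alpha {ζ : ℂ} (hζ : ‖ζ‖ = 1) : ∃ α, α ∈ Set.Ioc 0 (2 * π) ∧ bpt α = ζ := by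
  have h0 : bpt ζ.arg = ζ := by
    have h := Complex.norm_mul_exp_arg_mul_I ζ
    rw [hζ] at h
    simpa [bpt] using h
  rcases le_or_gt ζ.arg 0 with h | h
  · refine ⟨ζ.arg + 2 * π, ⟨?_, ?_⟩, ?_⟩
    · linarith [Complex.neg_pi_lt_arg ζ, Real.pi_pos]
    · linarith
    · rw [bpt_add, bpt_two_pi, mul_one, h0]
  · exact ⟨ζ.arg, ⟨h, by linarith [Complex.arg_le_pi ζ, Real.pi_pos]⟩, h0⟩

lemma abs_sub_lt_two_pi {α θ : ℝ} (hα : α ∈ Set.Ioc 0 (2 * π)) (hθ : θ ∈ Set.Ioc 0 (2 * π)) :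
    |θ - α| < 2 * π := by
  rcases hα with ⟨h1, h2⟩; rcases hθ with ⟨h3, h4⟩
  rw [abs_lt]; constructor <;> linarith

lemma chord_lb {α θ : ℝ} (hα : α ∈ Set.Ioc 0 (2 * π)) (hθ : θ ∈ Set.Ioc 0 (2 * π)) :
    min |θ - α| (2 * π - |θ - α|) ≤ 2 * ‖bpt θ - bpt α‖ := by
  have habs : |θ - α| < 2 * π := abs_sub_lt_two_pi hα hθ
  set x := θ - α with hxdef
  have hbpt : bpt θ - bpt α = bpt α * (bpt x - 1) := by
    rw [mul_sub, mul_one, ← bpt_add]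
    congr 1
    · congr 1; ring
  have hnorm : ‖bpt θ - bpt α‖ = ‖bpt x - 1‖ := by
    rw [hbpt, norm_mul, bpt_norm, one_mul]
  rw [hnorm]
  rcases le_or_gt |x| π with hc | hc
  · calc min |x| (2 * π - |x|) ≤ |x| := min_le_left _ _
      _ ≤ 2 * ‖bpt x - 1‖ := abs_le_two_mul_norm_bpt_sub_one hc
  · rcases le_or_gt x 0 with hxs | hxs
    · have hax : |x| = -x := abs_of_nonpos hxs
      have h1 : |x + 2 * π| = 2 * π - |x| := by
        rw [hax] at habs ⊢
        rw [_root_.abs_of_nonneg (show (0:ℝ) ≤ x + 2 * π by linarith)]; ring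
      have h2 : bpt (x + 2 * π) = bpt x := by rw [bpt_add, bpt_two_pi, mul_one]
      have h3 : |x + 2 * π| ≤ π := by rw [h1]; linarith
      calc min |x| (2 * π - |x|) ≤ 2 * π - |x| := min_le_right _ _
        _ = |x + 2 * π| := h1.symm
        _ ≤ 2 * ‖bpt (x + 2 * π) - 1‖ := abs_le_two_mul_norm_bpt_sub_one h3
        _ = 2 * ‖bpt x - 1‖ := by rw [h2]
    · have hax : |x| = x := abs_of_pos hxs
      have h1 : |x - 2 * π| = 2 * π - |x| := by
        rw [hax] at habs ⊢
        rw [_root_.abs_of_nonpos (show x - 2 * π ≤ (0:ℝ) by linarith)]; ring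
      have h2 : bpt (x - 2 * π + 2 * π) = bpt (x - 2 * π) := by
        rw [bpt_add, bpt_two_pi, mul_one]
      have h2' : bpt (x - 2 * π) = bpt x := by rw [← h2]; norm_num
      have h3 : |x - 2 * π| ≤ π := by rw [h1]; linarith
      calc min |x| (2 * π - |x|) ≤ 2 * π - |x| := min_le_right _ _
        _ = |x - 2 * π| := h1.symm
        _ ≤ 2 * ‖bpt (x - 2 * π) - 1‖ := abs_le_two_mul_norm_bpt_sub_one h3
        _ = 2 * ‖bpt x - 1‖ := by rw [h2']

lemma min_pos {α θ : ℝ} (hα : α ∈ Set.Ioc 0 (2 * π)) (hθ : θ ∈ Set.Ioc 0 (2 * π))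
    (hne : θ ≠ α) : 0 < min |θ - α| (2 * π - |θ - α|) :=
  lt_min (abs_pos.2 (sub_ne_zero.2 hne)) (by linarith [abs_sub_lt_two_pi hα hθ])

lemma bpt_ne {α θ : ℝ} (hα : α ∈ Set.Ioc 0 (2 * π)) (hθ : θ ∈ Set.Ioc 0 (2 * π))
    (hne : θ ≠ α) : bpt θ ≠ bpt α := by
  intro h
  have h1 := chord_lb hα hθ
  rw [h, sub_self, norm_zero, mul_zero] at h1
  exact absurd h1 (not_le.2 (min_pos hα hθ hne))

end AuxLemmas

section AuxMeasure

open Real MeasureTheory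

lemma arcM_ae_of_volume {P : ℝ → Prop} (h : ∀ᵐ θ ∂(volume : Measure ℝ), P θ) :
    ∀ᵐ θ ∂arcM, P θ := by
  unfold arcM
  exact Measure.ae_smul_measure (ae_restrict_of_ae h) _

lemma arcM_ae_mem : ∀ᵐ θ ∂arcM, θ ∈ Set.Ioc 0 (2 * π) := by
  unfold arcM
  exact Measure.ae_smul_measure (ae_restrict_mem measurableSet_Ioc) _

lemma arcM_ae_ne (α : ℝ) : ∀ᵐ θ ∂arcM, θ ≠ α := by
  apply arcM_ae_of_volume
  rw [MeasureTheory.ae_iff]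
  have h : {θ : ℝ | ¬ θ ≠ α} = {α} := by ext x; simp
  rw [h]
  exact measure_singleton α

lemma integrable_arcM {h : ℝ → ℝ}
    (hi : MeasureTheory.IntegrableOn h (Set.Ioc 0 (2 * π)) volume) :
    MeasureTheory.Integrable h arcM := by
  unfold arcM
  refine hi.smul_measure ?_
  rw [Ne, ENNReal.inv_eq_top]
  simp [Real.pi_pos]

lemma integrableN {p : ℝ} (hp1 : p < 1) {α : ℝ} (hα : α ∈ Set.Ioc 0 (2 * π)) :
    MeasureTheory.IntegrableOn (fun θ => |θ - α| ^ (-p) + (2 * π - |θ - α|) ^ (-p))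
      (Set.Ioc 0 (2 * π)) volume := by
  have hp' : (-1 : ℝ) < -p := by linarith
  have hsplit : Set.Ioc (0 : ℝ) (2 * π) = Set.Ioc 0 α ∪ Set.Ioc α (2 * π) :=
    (Set.Ioc_union_Ioc_eq_Ioc hα.1.le hα.2).symm
  rw [hsplit]
  have i1 : MeasureTheory.IntegrableOn (fun θ : ℝ => |θ - α| ^ (-p)) (Set.Ioc 0 α) volume := by
    have base : IntervalIntegrable (fun x : ℝ => x ^ (-p)) volume 0 α :=
      intervalIntegral.intervalIntegrable_rpow' hp'
    have h2 : IntervalIntegrable (fun x : ℝ => (α - x) ^ (-p)) volume α 0 := by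
      simpa using base.comp_sub_left α
    refine (h2.2).congr_fun ?_ measurableSet_Ioc
    intro x hx
    show (α - x) ^ (-p) = |x - α| ^ (-p)
    rw [_root_.abs_of_nonpos (show x - α ≤ 0 by linarith [hx.2])]
    norm_num
  have i2 : MeasureTheory.IntegrableOn (fun θ : ℝ => (2 * π - |θ - α|) ^ (-p))
      (Set.Ioc 0 α) volume := by
    have base : IntervalIntegrable (fun x : ℝ => x ^ (-p)) volume (2 * π - α) (2 * π) :=
      intervalIntegral.intervalIntegrable_rpow' hp'
    have h2 : IntervalIntegrable (fun x : ℝ => (x + (2 * π - α)) ^ (-p)) volume 0 α := by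
      simpa using base.comp_add_right (2 * π - α)
    refine (h2.1).congr_fun ?_ measurableSet_Ioc
    intro x hx
    show (x + (2 * π - α)) ^ (-p) = (2 * π - |x - α|) ^ (-p)
    rw [_root_.abs_of_nonpos (show x - α ≤ 0 by linarith [hx.2])]
    ring_nf
  have i3 : MeasureTheory.IntegrableOn (fun θ : ℝ => |θ - α| ^ (-p)) (Set.Ioc α (2 * π))
      volume := by
    have base : IntervalIntegrable (fun x : ℝ => x ^ (-p)) volume 0 (2 * π - α) :=
      intervalIntegral.intervalIntegrable_rpow' hp'
    have h2 : IntervalIntegrable (fun x : ℝ => (x - α) ^ (-p)) volume α (2 * π) := by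
      simpa using base.comp_sub_right α
    refine (h2.1).congr_fun ?_ measurableSet_Ioc
    intro x hx
    show (x - α) ^ (-p) = |x - α| ^ (-p)
    rw [_root_.abs_of_nonneg (show (0:ℝ) ≤ x - α by linarith [hx.1.le])]
  have i4 : MeasureTheory.IntegrableOn (fun θ : ℝ => (2 * π - |θ - α|) ^ (-p))
      (Set.Ioc α (2 * π)) volume := by
    have base : IntervalIntegrable (fun x : ℝ => x ^ (-p)) volume (2 * π) α :=
      intervalIntegral.intervalIntegrable_rpow' hp'
    have h2 : IntervalIntegrable (fun x : ℝ => (2 * π + α - x) ^ (-p)) volume α (2 * π) := by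
      have := base.comp_sub_left (2 * π + α)
      simpa using this
    refine (h2.1).congr_fun ?_ measurableSet_Ioc
    intro x hx
    show (2 * π + α - x) ^ (-p) = (2 * π - |x - α|) ^ (-p)
    rw [_root_.abs_of_nonneg (show (0:ℝ) ≤ x - α by linarith [hx.1.le])]
    ring_nf
  exact MeasureTheory.IntegrableOn.union (i1.add i2) (i3.add i4)

end AuxMeasure

section AuxMain

open Real MeasureTheory

lemma norm_coe_real (r : ℝ) : ‖(r : ℂ)‖ = |r| := by
  rw [Complex.norm_real, Real.norm_eq_abs]

lemma conj_mul_self1 {z : ℂ} (hz : ‖z‖ = 1) : (starRingEnd ℂ) z * z = 1 := by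
  rw [mul_comm, Complex.mul_conj]
  norm_cast
  rw [Complex.normSq_eq_norm_sq, hz]; norm_num

lemma bpt_conj (θ : ℝ) : (starRingEnd ℂ) (bpt θ) = (bpt θ)⁻¹ := by
  rw [bpt, ← Complex.exp_conj, ← Complex.exp_neg]
  congr 1
  simp [Complex.conj_I]

end AuxMain

/-- for `0 < p < 1`, any inner function `ϑ` and any `ζ ∈ 𝕋`, the rational
function `z ↦ 1/(1 - conj(ζ) z)` belongs to `H^p` and its boundary function lies in
`ϑ ⋅ conj(H^p_0)`. -/
theorem rational_in_Hp_and_pseudocontinuable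
    (p : ℝ) (hp0 : 0 < p) (hp1 : p < 1) (ϑ : ℂ → ℂ) (hϑ : IsInner ϑ)
    (ζ : ℂ) (hζ : ζ ∈ uCircle) :
    MemHp p (fun z => 1 / (1 - (starRingEnd ℂ) ζ * z)) ∧
      PseudoCont p ϑ (fun z => 1 / (1 - (starRingEnd ℂ) ζ * z)) := by
  have hpi : (0:ℝ) < Real.pi := Real.pi_pos
  obtain ⟨⟨hϑdiff, C, hC⟩, Θ, hΘbd, hΘ1⟩ := hϑ
  have hζn : ‖ζ‖ = 1 := by simpa [uCircle] using hζ
  obtain ⟨α, hα, hbα⟩ := exists_alpha hζn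
  set c : ℂ := (starRingEnd ℂ) ζ with hc
  set f : ℂ → ℂ := fun z => 1 / (1 - c * z) with hf
  set q : ℂ → ℂ := fun z => -c * z / (1 - c * z) with hq
  set g : ℂ → ℂ := fun z => ϑ z * q z with hg
  set C' : ℝ := max C 1 with hC'
  have hC'0 : (0:ℝ) < C' := lt_of_lt_of_le one_pos (le_max_right _ _)
  have hCb : ∀ z ∈ uDisc, ‖ϑ z‖ ≤ C' := fun z hz => (hC z hz).trans (le_max_left _ _)
  have hcn : ‖c‖ = 1 := by rw [hc, RCLike.norm_conj, hζn]
  have hcζ : c * ζ = 1 := conj_mul_self1 hζn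
  have hden : ∀ z : ℂ, ‖z‖ < 1 → 1 - c * z ≠ 0 := by
    intro z hz h
    have h1 : c * z = 1 := by linear_combination -h
    have h2 := congrArg norm h1
    rw [norm_mul, hcn, one_mul, norm_one] at h2
    exact absurd h2 (ne_of_lt hz)
  have hdenζ : ∀ w : ℂ, w ≠ ζ → 1 - c * w ≠ 0 := by
    intro w hw h
    apply hw
    have h1 : c * w = 1 := by linear_combination -h
    have h2 : c * (w - ζ) = 0 := by rw [mul_sub, h1, hcζ, sub_self]
    have hc0 : c ≠ 0 := by intro h3; rw [h3, norm_zero] at hcn; norm_num at hcn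
    exact sub_eq_zero.mp ((mul_eq_zero.mp h2).resolve_left hc0)
  have hmem : ∀ (r : ℝ), r ∈ Set.Ioo (0:ℝ) 1 → ∀ θ : ℝ, ((r:ℂ) * bpt θ) ∈ uDisc := by
    intro r hr θ
    have : ‖(r:ℂ) * bpt θ‖ = r := by
      rw [norm_mul, bpt_norm, mul_one, norm_coe_real, abs_of_pos hr.1]
    simp only [uDisc, mem_ball_zero_iff]; rw [this]; exact hr.2
  have hnormr : ∀ (r : ℝ), r ∈ Set.Ioo (0:ℝ) 1 → ∀ θ : ℝ, ‖(r:ℂ) * bpt θ‖ = r := by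
    intro r hr θ
    rw [norm_mul, bpt_norm, mul_one, norm_coe_real, abs_of_pos hr.1]
  set m : ℝ → ℝ := fun θ => min |θ - α| (2 * Real.pi - |θ - α|) with hm
  -- pointwise bound on ‖f‖
  have hfb : ∀ θ ∈ Set.Ioc 0 (2 * Real.pi), θ ≠ α → ∀ r ∈ Set.Ioo (0:ℝ) 1,
      ‖f ((r:ℂ) * bpt θ)‖ ≤ 4 / m θ := by
    intro θ hθ hne r hr
    have hm0 : 0 < m θ := min_pos hα hθ hne
    have hch : m θ ≤ 2 * ‖bpt θ - ζ‖ := by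
      have := chord_lb hα hθ
      rwa [hbα] at this
    set u : ℂ := c * bpt θ with hu
    have hun : ‖u‖ = 1 := by rw [hu, norm_mul, hcn, bpt_norm, mul_one]
    have harr : 1 - c * ((r:ℂ) * bpt θ) = 1 - (r:ℂ) * u := by rw [hu]; ring_nf
    have t1 : ‖1 - u‖ ≤ ‖1 - (r:ℂ) * u‖ + ‖(r:ℂ) * u - u‖ := by
      have := dist_triangle (1:ℂ) ((r:ℂ) * u) u
      simpa [dist_eq_norm] using this
    have t2 : ‖(r:ℂ) * u - u‖ = 1 - r := by
      have e : (r:ℂ) * u - u = ((r - 1 : ℝ) : ℂ) * u := by push_cast; ring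
      rw [e, norm_mul, hun, mul_one, norm_coe_real,
        abs_of_nonpos (show r - 1 ≤ 0 by linarith [hr.2])]
      ring
    have t3 : 1 - r ≤ ‖1 - (r:ℂ) * u‖ := by
      have h3 := norm_sub_norm_le (1:ℂ) ((r:ℂ) * u)
      rw [norm_one, norm_mul, hun, mul_one, norm_coe_real, abs_of_pos hr.1] at h3
      exact h3
    have t4 : ‖1 - u‖ ≤ 2 * ‖1 - (r:ℂ) * u‖ := by linarith
    have h1u : ‖1 - u‖ = ‖bpt θ - ζ‖ := by
      have e : 1 - u = c * (ζ - bpt θ) := by rw [hu, mul_sub, hcζ]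
      rw [e, norm_mul, hcn, one_mul, norm_sub_rev]
    have hDpos : 0 < ‖1 - (r:ℂ) * u‖ := by
      rw [h1u] at t4
      linarith
    have hval : ‖f ((r:ℂ) * bpt θ)‖ = 1 / ‖1 - (r:ℂ) * u‖ := by
      rw [hf]
      simp only
      rw [norm_div, norm_one, harr]
    rw [hval, div_le_div_iff₀ hDpos hm0]
    rw [h1u] at t4
    nlinarith
  -- rpow bound
  set N : ℝ → ℝ := fun θ => (4:ℝ) ^ p * (|θ - α| ^ (-p) + (2 * Real.pi - |θ - α|) ^ (-p))
    with hN
  have hNint : Integrable N arcM := (integrable_arcM (integrableN hp1 hα)).const_mul _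
  have hrpow : ∀ θ ∈ Set.Ioc 0 (2 * Real.pi), θ ≠ α → ∀ y : ℝ, 0 ≤ y → y ≤ 4 / m θ →
      y ^ p ≤ N θ := by
    intro θ hθ hne y hy0 hy
    have hm0 : 0 < m θ := min_pos hα hθ hne
    have habs2 : |θ - α| < 2 * Real.pi := abs_sub_lt_two_pi hα hθ
    have h1 : y ^ p ≤ (4 / m θ) ^ p := Real.rpow_le_rpow hy0 hy hp0.le
    have h2 : (4 / m θ) ^ p = (4:ℝ) ^ p * (m θ) ^ (-p) := by
      rw [Real.div_rpow (by norm_num) hm0.le, Real.rpow_neg hm0.le, div_eq_mul_inv]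
    have h3 : (m θ) ^ (-p) ≤ |θ - α| ^ (-p) + (2 * Real.pi - |θ - α|) ^ (-p) := by
      rcases le_total |θ - α| (2 * Real.pi - |θ - α|) with hle | hle
      · rw [show m θ = |θ - α| from min_eq_left hle]
        have := Real.rpow_nonneg (show (0:ℝ) ≤ 2 * Real.pi - |θ - α| by linarith) (-p)
        linarith
      · rw [show m θ = 2 * Real.pi - |θ - α| from min_eq_right hle]
        have := Real.rpow_nonneg (abs_nonneg (θ - α)) (-p)
        linarith
    calc y ^ p ≤ (4:ℝ) ^ p * (m θ) ^ (-p) := by rw [← h2]; exact h1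
      _ ≤ N θ := mul_le_mul_of_nonneg_left h3 (Real.rpow_nonneg (by norm_num) p)
  -- generic integral comparison
  have hIbound : ∀ (u NN : ℝ → ℝ), Integrable NN arcM → AEStronglyMeasurable u arcM →
      (∀ θ, 0 ≤ u θ) → (∀ᵐ θ ∂arcM, u θ ≤ NN θ) →
      ∫ θ, u θ ∂arcM ≤ ∫ θ, NN θ ∂arcM := by
    intro u NN hNN hmeas hnn hb
    have hint : Integrable u arcM := by
      refine hNN.mono' hmeas ?_
      filter_upwards [hb] with θ h
      rw [Real.norm_eq_abs, _root_.abs_of_nonneg (hnn θ)]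
      exact h
    exact integral_mono_ae hint hNN hb
  have haeζ : ∀ᵐ θ ∂arcM, θ ∈ Set.Ioc 0 (2 * Real.pi) ∧ θ ≠ α ∧ bpt θ ≠ ζ := by
    filter_upwards [arcM_ae_mem, arcM_ae_ne α] with θ h1 h2
    exact ⟨h1, h2, hbα ▸ bpt_ne hα h1 h2⟩
  -- continuity of the f-integrand
  have hcontf : ∀ (r : ℝ), r ∈ Set.Ioo (0:ℝ) 1 →
      Continuous fun θ : ℝ => ‖f ((r:ℂ) * bpt θ)‖ ^ p := by
    intro r hr
    have hdc : Continuous fun θ : ℝ => 1 - c * ((r:ℂ) * bpt θ) := by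
      exact continuous_const.sub (continuous_const.mul (continuous_const.mul bpt_continuous))
    have hfc : Continuous fun θ : ℝ => f ((r:ℂ) * bpt θ) := by
      rw [hf]
      exact continuous_const.div hdc fun θ => hden _ (by rw [hnormr r hr θ]; exact hr.2)
    exact (hfc.norm).rpow_const fun θ => Or.inr hp0.le
  have hmemHpf : MemHp p f := by
    constructor
    · intro z hz
      have hz' : ‖z‖ < 1 := by simpa [uDisc, mem_ball_zero_iff] using hz
      exact DifferentiableOn.div (differentiableOn_const _)
        ((differentiableOn_const _).sub ((differentiableOn_const c).mul differentiableOn_id))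
        (fun w hw => hden w (by simpa [uDisc, mem_ball_zero_iff] using hw)) z hz
    · refine ⟨∫ θ, N θ ∂arcM, ?_⟩
      rintro x ⟨r, hr, rfl⟩
      refine hIbound _ N hNint ((hcontf r hr).aestronglyMeasurable)
        (fun θ => Real.rpow_nonneg (norm_nonneg _) p) ?_
      filter_upwards [haeζ] with θ ⟨h1, h2, _⟩
      exact hrpow θ h1 h2 _ (norm_nonneg _) (hfb θ h1 h2 r hr)
  refine ⟨hmemHpf, ?_⟩
  -- pseudocontinuation
  set F : ℝ → ℂ := fun θ => 1 / (1 - c * bpt θ) with hF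
  set G : ℝ → ℂ := fun θ => Θ θ * q (bpt θ) with hG
  have hqtend : ∀ θ : ℝ, bpt θ ≠ ζ →
      Filter.Tendsto (fun r : ℝ => q ((r:ℂ) * bpt θ)) (nhdsWithin 1 (Set.Iio 1))
        (nhds (q (bpt θ))) := by
    intro θ hθζ
    have hd : 1 - c * bpt θ ≠ 0 := hdenζ _ hθζ
    have hnum : Filter.Tendsto (fun r : ℝ => -c * ((r:ℂ) * bpt θ)) (nhds 1)
        (nhds (-c * bpt θ)) := by
      have hcont : Continuous fun r : ℝ => -c * ((r:ℂ) * bpt θ) := by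
        exact continuous_const.mul (Complex.continuous_ofReal.mul continuous_const)
      simpa using hcont.tendsto 1
    have hdeno : Filter.Tendsto (fun r : ℝ => 1 - c * ((r:ℂ) * bpt θ)) (nhds 1)
        (nhds (1 - c * bpt θ)) := by
      have hcont : Continuous fun r : ℝ => 1 - c * ((r:ℂ) * bpt θ) := by
        exact continuous_const.sub
          (continuous_const.mul (Complex.continuous_ofReal.mul continuous_const))
      simpa using hcont.tendsto 1
    exact ((hnum.div hdeno hd).mono_left nhdsWithin_le_nhds)
  have hFbd : BoundaryFn f F := by
    filter_upwards [haeζ] with θ ⟨_, _, hθζ⟩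
    have hd : 1 - c * bpt θ ≠ 0 := hdenζ _ hθζ
    have hdeno : Filter.Tendsto (fun r : ℝ => 1 - c * ((r:ℂ) * bpt θ)) (nhds 1)
        (nhds (1 - c * bpt θ)) := by
      have hcont : Continuous fun r : ℝ => 1 - c * ((r:ℂ) * bpt θ) := by
        exact continuous_const.sub
          (continuous_const.mul (Complex.continuous_ofReal.mul continuous_const))
      simpa using hcont.tendsto 1
    exact (tendsto_const_nhds.div hdeno hd).mono_left nhdsWithin_le_nhds
  have hmemHpg : MemHp p g := by
    constructor
    · refine DifferentiableOn.mul hϑdiff ?_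
      refine DifferentiableOn.div ((differentiableOn_const _).mul differentiableOn_id)
        ((differentiableOn_const _).sub ((differentiableOn_const c).mul differentiableOn_id))
        fun w hw => hden w (by simpa [uDisc, mem_ball_zero_iff] using hw)
    · refine ⟨C' ^ p * ∫ θ, N θ ∂arcM, ?_⟩
      rintro x ⟨r, hr, rfl⟩
      have hNint' : Integrable (fun θ => C' ^ p * N θ) arcM := hNint.const_mul _
      have hintCN : ∫ θ, C' ^ p * N θ ∂arcM = C' ^ p * ∫ θ, N θ ∂arcM :=
        integral_const_mul _ _
      rw [← hintCN]
      have hgcont : Continuous fun θ : ℝ => ‖g ((r:ℂ) * bpt θ)‖ ^ p := by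
        have hϑc : Continuous fun θ : ℝ => ϑ ((r:ℂ) * bpt θ) :=
          (hϑdiff.continuousOn).comp_continuous (continuous_const.mul bpt_continuous)
            (hmem r hr)
        have hqc : Continuous fun θ : ℝ => q ((r:ℂ) * bpt θ) := by
          rw [hq]
          exact Continuous.div
            (continuous_const.mul (continuous_const.mul bpt_continuous))
            (continuous_const.sub (continuous_const.mul (continuous_const.mul bpt_continuous)))
            (fun θ => hden _ (by rw [hnormr r hr θ]; exact hr.2))
        exact ((hϑc.mul hqc).norm).rpow_const fun θ => Or.inr hp0.le
      refine hIbound _ _ hNint' hgcont.aestronglyMeasurable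
        (fun θ => Real.rpow_nonneg (norm_nonneg _) p) ?_
      filter_upwards [haeζ] with θ ⟨h1, h2, _⟩
      have hm0 : 0 < m θ := min_pos hα h1 h2
      have hϑb : ‖ϑ ((r:ℂ) * bpt θ)‖ ≤ C' := hCb _ (hmem r hr θ)
      have hqf : ‖q ((r:ℂ) * bpt θ)‖ ≤ ‖f ((r:ℂ) * bpt θ)‖ := by
        rw [hq, hf]
        simp only
        rw [norm_div, norm_div, norm_one, neg_mul, norm_neg, norm_mul, hcn, one_mul,
          hnormr r hr θ]
        have hdpos : 0 < ‖1 - c * ((r:ℂ) * bpt θ)‖ :=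
          norm_pos_iff.2 (hden _ (by rw [hnormr r hr θ]; exact hr.2))
        exact (div_le_div_iff_of_pos_right hdpos).2 hr.2.le
      have hgb : ‖g ((r:ℂ) * bpt θ)‖ ≤ C' * (4 / m θ) := by
        rw [hg]
        simp only [norm_mul]
        have h4 := hfb θ h1 h2 r hr
        nlinarith [norm_nonneg (q ((r:ℂ) * bpt θ)), norm_nonneg (ϑ ((r:ℂ) * bpt θ)),
          norm_nonneg (f ((r:ℂ) * bpt θ))]
      calc ‖g ((r:ℂ) * bpt θ)‖ ^ p ≤ (C' * (4 / m θ)) ^ p :=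
            Real.rpow_le_rpow (norm_nonneg _) hgb hp0.le
        _ = C' ^ p * (4 / m θ) ^ p := Real.mul_rpow hC'0.le (by positivity)
        _ ≤ C' ^ p * N θ := mul_le_mul_of_nonneg_left
            (hrpow θ h1 h2 _ (by positivity) le_rfl) (Real.rpow_nonneg hC'0.le p)
  have hg0 : g 0 = 0 := by simp [hg, hq]
  have hGbd : BoundaryFn g G := by
    filter_upwards [hΘbd, haeζ] with θ ht hmm
    exact ht.mul (hqtend θ hmm.2.2)
  refine ⟨F, Θ, G, g, hFbd, hΘbd, hmemHpg, hg0, hGbd, ?_⟩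
  filter_upwards [hΘ1, haeζ] with θ hΘn hmm
  obtain ⟨-, -, hθζ⟩ := hmm
  set w : ℂ := bpt θ with hw
  have hw0 : w ≠ 0 := bpt_ne_zero θ
  have hd : 1 - c * w ≠ 0 := hdenζ _ hθζ
  have hwζ : w - ζ ≠ 0 := sub_ne_zero.2 hθζ
  show F θ = Θ θ * (starRingEnd ℂ) (G θ)
  rw [hG]
  simp only [map_mul]
  rw [← mul_assoc, Complex.mul_conj, Complex.normSq_eq_norm_sq, hΘn]
  norm_num
  -- goal : F θ = conj (q w)
  have hcc : (starRingEnd ℂ) c = ζ := by rw [hc, Complex.conj_conj]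
  rw [hF, hq]
  simp only [map_div₀, map_neg, map_mul, map_sub, map_one, hcc, ← hw]
  have hwconj : (starRingEnd ℂ) w = w⁻¹ := by rw [hw]; exact bpt_conj θ
  rw [hwconj]
  have e1 : -ζ * w⁻¹ / (1 - ζ * w⁻¹) = -ζ / (w - ζ) := by
    rw [show (1 : ℂ) - ζ * w⁻¹ = (w - ζ) * w⁻¹ by field_simp,
      mul_div_mul_right _ _ (inv_ne_zero hw0)]
  rw [e1, div_eq_div_iff hd hwζ]
  linear_combination (-w) * hcζ
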